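/- arXiv:2010.16340 — 3 statements merged into one kernel-verified Lean document; each statement's English description precedes it below -/
import Mathlib

section
/- (Proposition 1) Let D be a database over attributes 𝒜, let S1 ⊆ S2 ⊆ 𝒜, let l1 = L_{S1}(D) and l2 = L_{S2}(D), let p be a pattern with Attr(p) ⊄ S2, and let p' = p|_{Attr(p) ∩ S2} be the restriction of p to the attributes appearing in S2. If the estimate of p' using l1 is an over estimation and the estimate of p using l2 is an over estimation, then Err(l2, p) ≤ Err(l1, p); likewise, if the estimate of p' using l1 is an under estimation and the estimate of p using l2 is an under estimation, then Err(l2, p) ≤ Err(l1, p). -/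
open Finset

/-- The count `c_D(p)` of the pattern `p` with attribute set `T` and value assignment `f`:
the number of tuples of the database `D` (a multiset of tuples, i.e. counted with
multiplicity) that agree with `f` on every attribute of `T`. -/
def cnt {α V : Type*} [DecidableEq α] [DecidableEq V]
    (D : Multiset (α → V)) (T : Finset α) (f : α → V) : ℕ :=
  (D.filter fun t => ∀ A ∈ T, t A = f A).card

/-- The count `c_D({A = a})` of tuples taking value `a` on attribute `A`. -/
def cnt1 {α V : Type*} [DecidableEq V]
    (D : Multiset (α → V)) (A : α) (a : V) : ℕ :=
  (D.filter fun t => t A = a).card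

/-- The count estimate `Est(p, L_S(D))` of the pattern `p = (T, f)` using the label of `D`
over the attribute set `S`:
`c_D(p|_S) · ∏_{A ∈ Attr(p) \ S} c_D({A = p.A}) / (Σ_{a ∈ Dom(A)} c_D({A = a}))`. -/
def est {α V : Type*} [DecidableEq α] [DecidableEq V]
    (D : Multiset (α → V)) (Dom : α → Finset V) (S T : Finset α) (f : α → V) : ℚ :=
  (cnt D (T ∩ S) f : ℚ) *
    ∏ A ∈ T \ S, (cnt1 D A (f A) : ℚ) / (∑ a ∈ Dom A, (cnt1 D A a : ℚ))

/-- The estimation error `Err(L_S(D), p) = |c_D(p) − Est(p, L_S(D))|` of the label over `S`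
with respect to the pattern `p = (T, f)`. -/
def err {α V : Type*} [DecidableEq α] [DecidableEq V]
    (D : Multiset (α → V)) (Dom : α → Finset V) (S T : Finset α) (f : α → V) : ℚ :=
  |(cnt D T f : ℚ) - est D Dom S T f|

/-- (Proposition 1) For `S1 ⊆ S2 ⊆ 𝒜`, labels `l1 = L_{S1}(D)`, `l2 = L_{S2}(D)`, and a
pattern `p = (T, f)` with `Attr(p) ⊄ S2`, writing `p' = p|_{Attr(p) ∩ S2}`
(the pattern `(T ∩ S2, f)`): if the estimate of `p'` using `l1` is an over estimation and
the estimate of `p` using `l2` is an over estimation then `Err(l2, p) ≤ Err(l1, p)`;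
likewise if both are under estimations then `Err(l2, p) ≤ Err(l1, p)`. -/
theorem err_subset_monotone {α V : Type*} [DecidableEq α] [DecidableEq V]
    (D : Multiset (α → V)) (Dom : α → Finset V)
    (hDomNe : ∀ A : α, (Dom A).Nonempty)
    (hDomVal : ∀ t ∈ D, ∀ A : α, t A ∈ Dom A)
    (hpos : ∀ A : α, 0 < ∑ a ∈ Dom A, cnt1 D A a)
    (S1 S2 T : Finset α) (f : α → V) (h12 : S1 ⊆ S2) (hT : ¬ T ⊆ S2) :
    (((cnt D (T ∩ S2) f : ℚ) < est D Dom S1 (T ∩ S2) f ∧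
        (cnt D T f : ℚ) < est D Dom S2 T f) →
      err D Dom S2 T f ≤ err D Dom S1 T f) ∧
    ((est D Dom S1 (T ∩ S2) f < (cnt D (T ∩ S2) f : ℚ) ∧
        est D Dom S2 T f < (cnt D T f : ℚ)) →
      err D Dom S2 T f ≤ err D Dom S1 T f) := by

  set r : ℚ := ∏ A ∈ T \ S2, (cnt1 D A (f A) : ℚ) / (∑ a ∈ Dom A, (cnt1 D A a : ℚ)) with hr
  have hr0 : 0 ≤ r := Finset.prod_nonneg fun A _ =>
    div_nonneg (by positivity) (Finset.sum_nonneg fun a _ => by positivity)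
  have hsplit : T \ S1 = ((T ∩ S2) \ S1) ∪ (T \ S2) := by
    ext x
    simp only [Finset.mem_sdiff, Finset.mem_union, Finset.mem_inter]
    constructor
    · rintro ⟨hx, hx1⟩
      by_cases h : x ∈ S2
      · exact Or.inl ⟨⟨hx, h⟩, hx1⟩
      · exact Or.inr ⟨hx, h⟩
    · rintro (⟨⟨hx, _⟩, hx1⟩ | ⟨hx, hx2⟩)
      · exact ⟨hx, hx1⟩
      · exact ⟨hx, fun h => hx2 (h12 h)⟩
  have hdisj : Disjoint ((T ∩ S2) \ S1) (T \ S2) := by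
    rw [Finset.disjoint_left]
    rintro x hx hx2
    simp only [Finset.mem_sdiff, Finset.mem_inter] at hx hx2
    exact hx2.2 hx.1.2
  have hinter : T ∩ S2 ∩ S1 = T ∩ S1 := by
    rw [Finset.inter_assoc, Finset.inter_eq_right.mpr h12]
  have hfac : est D Dom S1 T f = est D Dom S1 (T ∩ S2) f * r := by
    unfold est
    rw [hsplit, Finset.prod_union hdisj, hinter, mul_assoc, hr]
  have h2 : est D Dom S2 T f = (cnt D (T ∩ S2) f : ℚ) * r := rfl
  constructor
  · rintro ⟨h1, h1'⟩
    have hle : est D Dom S2 T f ≤ est D Dom S1 T f := by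
      rw [hfac, h2]; exact mul_le_mul_of_nonneg_right h1.le hr0
    unfold err
    rw [abs_of_nonpos (by linarith), abs_of_nonpos (by linarith)]
    linarith
  · rintro ⟨h1, h1'⟩
    have hle : est D Dom S1 T f ≤ est D Dom S2 T f := by
      rw [hfac, h2]; exact mul_le_mul_of_nonneg_right h1.le hr0
    unfold err
    rw [abs_of_nonneg (by linarith), abs_of_nonneg (by linarith)]
    linarith
end

section
/- Each node of the label lattice is generated exactly once by the gen operator: let 𝒜 = {A_1, …, A_n} be a finite linearly ordered attribute set. For every nonempty subset T ⊆ 𝒜 there exists exactly one subset S ⊆ 𝒜 with T ∈ gen(S), namely S = T \ {A_{idx(T)}}, the set obtained by removing from T the attribute of maximal index. -/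
open Finset

/-- The `gen` operator over the linearly ordered attribute set `𝒜 = Fin n`:
`gen(S) = { S ∪ {A_j} : idx(S) < j ≤ n }`, i.e. the subsets obtained from `S` by adding a
single attribute whose index exceeds the maximal index `idx(S)` of an attribute of `S`
(with `idx(∅) = 0`, so every attribute may be added to `∅`). -/
def gen {n : ℕ} (S : Finset (Fin n)) : Set (Finset (Fin n)) :=
  {T | ∃ j : Fin n, (∀ i ∈ S, i < j) ∧ T = insert j S}

/-- Each node of the label lattice is generated exactly once by the `gen` operator:
for every nonempty subset `T` of the attributes, there is exactly one subset `S` with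
`T ∈ gen(S)`, namely `S = T \ {A_{idx(T)}}`, obtained by removing from `T` the attribute
of maximal index. -/
theorem gen_unique {n : ℕ} (T : Finset (Fin n)) (hT : T.Nonempty) :
    ∀ S : Finset (Fin n), T ∈ gen S ↔ S = T.erase (T.max' hT) := by
  intro S
  constructor
  · rintro ⟨j, hlt, rfl⟩
    have hmax : (insert j S).max' hT = j := by
      apply le_antisymm
      · apply max'_le
        intro i hi
        rcases mem_insert.mp hi with rfl | hi
        · exact le_rfl
        · exact (hlt i hi).le
      · exact le_max' _ _ (mem_insert_self _ _)
    rw [hmax, erase_insert]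
    intro hj
    exact absurd rfl (hlt j hj).ne
  · rintro rfl
    refine ⟨T.max' hT, ?_, ?_⟩
    · intro i hi
      exact lt_of_le_of_ne (le_max' _ _ (mem_of_mem_erase hi)) (ne_of_mem_erase hi)
    · rw [insert_erase (max'_mem T hT)]
end

section
/- Exact-estimation case of Lemma 1: let G = (V, E) be a finite simple undirected graph with |V| ≥ 2, |E| ≥ 1, and no self-loops, let D be the reduction database constructed from G, let e_r = {v_i, v_j} ∈ E, and let p = {A_E = x_r, A_i = x_1, A_j = x_1}. If S ⊆ 𝒜 satisfies A_E ∈ S, A_i ∈ S, and A_j ∉ S, then c_D({A_E = x_r, A_i = x_1}) = 2·|E| and Est(p, L_S(D)) = |E| = c_D(p), so Err(L_S(D), p) = 0. -/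
open Finset

namespace PatternLabel

/-- Attributes of the reduction database: `none` is the edge attribute `A_E`;
`some v` is the vertex attribute `A_v`. -/
abbrev Attr (V : Type*) := Option V

/-- Values of the reduction database: `Sum.inl e` is the domain value `x_r` of `A_E`
corresponding to the edge `e = e_r`; `Sum.inr 0` is `x_1` and `Sum.inr 1` is `x_2`. -/
abbrev Val (V : Type*) := Sym2 V ⊕ Fin 2

/-- A tuple is a partial assignment of values to attributes (`Option.none` = undefined). -/
abbrev Tup (V : Type*) := Attr V → Option (Val V)

variable {V : Type*} [Fintype V] [DecidableEq V]

/-- The (at most two) endpoints of an unordered pair of vertices, as a finset. -/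
def endpoints (z : Sym2 V) : Finset V := Finset.univ.filter (fun v => v ∈ z)

/-- The tuple whose edge attribute `A_E` has value `x_e` for `eo = some e` (and is
undefined for `eo = none`), and whose vertex attribute `A_v` has value `x_{g v + 1}`
for `v ∈ P` and is undefined for `v ∉ P`. -/
def tupleOf (eo : Option (Sym2 V)) (P : Finset V) (g : V → Fin 2) : Tup V := fun A =>
  match A with
  | none => eo.map Sum.inl
  | some v => if v ∈ P then some (Sum.inr (g v)) else none

variable (G : SimpleGraph V) [DecidableRel G.Adj]

/-- `|E|`, the number of edges of the graph. -/
def numE : ℕ := G.edgeFinset.card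

/-- The reduction database `D` built from the simple graph `G = (V, E)`:
* for each edge `e_r = {v_i, v_j} ∈ E` and each `(p, q) ∈ {1,2}²`, `|E|` copies of the
  tuple defined only on `A_E, A_i, A_j` with `A_E = x_r`, `A_i = x_p`, `A_j = x_q`;
* for each unordered pair `{v_i, v_j}` of distinct vertices with `{v_i, v_j} ∉ E` and
  each `(p, q) ∈ {1,2}²`, `|E|` copies of the tuple defined only on `A_i, A_j` with
  `A_i = x_p`, `A_j = x_q`;
* for each edge `{v_i, v_j} ∈ E` and each `p ∈ {1,2}`, `2·|E|²` copies of the tuple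
  defined only on `A_i, A_j` with `A_i = x_p`, `A_j = x_p`. -/
def redDB : Multiset (Tup V) :=
  (∑ e ∈ G.edgeFinset,
      numE G • (Finset.univ.image fun g : V → Fin 2 => tupleOf (some e) (endpoints e) g).val)
    + (∑ z ∈ (Finset.univ : Finset V).sym2.filter
          (fun z => ¬ z.IsDiag ∧ z ∉ G.edgeFinset),
        numE G • (Finset.univ.image fun g : V → Fin 2 => tupleOf none (endpoints z) g).val)
    + (∑ e ∈ G.edgeFinset,
        (2 * numE G ^ 2) •
          (Finset.univ.image fun p : Fin 2 => tupleOf none (endpoints e) fun _ => p).val)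

/-- The count `c_D(p)` of the pattern `p` with attribute set `T` and value assignment `f`:
the number of tuples of `D` (with multiplicity) that are defined on every attribute of `T`
and agree with `f` there. -/
def cnt (D : Multiset (Tup V)) (T : Finset (Attr V)) (f : Attr V → Val V) : ℕ :=
  (D.filter fun t => ∀ A ∈ T, t A = some (f A)).card

/-- The count `c_D({A = w})` of tuples defined on attribute `A` with value `w` there. -/
def cnt1 (D : Multiset (Tup V)) (A : Attr V) (w : Val V) : ℕ :=
  (D.filter fun t => t A = some w).card

/-- The domain of an attribute: `Dom(A_v) = {x_1, x_2}` and `Dom(A_E) = {x_r : e_r ∈ E}`. -/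
def dom (A : Attr V) : Finset (Val V) :=
  match A with
  | none => G.edgeFinset.image Sum.inl
  | some _ => {Sum.inr 0, Sum.inr 1}

/-- The count estimate `Est(p, L_S(D))` of the pattern `p = (T, f)` using the label over
`S`: `c_D(p|_S) · ∏_{A ∈ Attr(p) \ S} c_D({A = p.A}) / (Σ_{a ∈ Dom(A)} c_D({A = a}))`. -/
def est (D : Multiset (Tup V)) (S T : Finset (Attr V)) (f : Attr V → Val V) : ℚ :=
  (cnt D (T ∩ S) f : ℚ) *
    ∏ A ∈ T \ S, (cnt1 D A (f A) : ℚ) / (∑ w ∈ dom G A, (cnt1 D A w : ℚ))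

/-- The estimation error `Err(L_S(D), p) = |c_D(p) − Est(p, L_S(D))|`. -/
def err (D : Multiset (Tup V)) (S T : Finset (Attr V)) (f : Attr V → Val V) : ℚ :=
  |(cnt D T f : ℚ) - est G D S T f|

/-- The attribute set `{A_E, A_i, A_j}` of the reduction pattern of the edge `e = {v_i, v_j}`. -/
def patT (e : Sym2 V) : Finset (Attr V) := insert none ((endpoints e).image some)

/-- The value assignment of the reduction pattern of the edge `e = e_r`:
`A_E = x_r` and `A_v = x_1` on vertex attributes. -/
def patF (e : Sym2 V) : Attr V → Val V := fun A =>
  match A with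
  | none => Sum.inl e
  | some _ => Sum.inr 0

/-- The label size `|L_S(D)|`: the number of patterns `q` with `Attr(q) = S` (assignments
of a value to each attribute of `S`) and `c_D(q) > 0`, where a tuple satisfies `q` if it is
defined on all attributes of `S` and agrees with `q` there. -/
def labelSize (D : Multiset (Tup V)) (S : Finset (Attr V)) : ℕ :=
  (Finset.univ.filter fun f : {A : Attr V // A ∈ S} → Val V =>
    0 < (D.filter fun t => ∀ A : {A : Attr V // A ∈ S}, t A.1 = some (f A)).card).card

/-- `Err(L_S(D), 𝒫)`: the maximum error of the label over `S` with respect to the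
reduction's pattern set `𝒫 = { {A_E = x_r, A_i = x_1, A_j = x_1} : e_r = {v_i, v_j} ∈ E }`. -/
def errSet (D : Multiset (Tup V)) (S : Finset (Attr V)) (hE : G.edgeFinset.Nonempty) : ℚ :=
  G.edgeFinset.sup' hE fun e => err G D S (patT e) (patF e)


/-!
Only the edge block of `e_r` has tuples with `A_E = x_r`: its four tuples, `|E|` copies each,
give `c_D({A_E = x_r, A_i = x_1}) = 2·|E|` and `c_D(p) = |E|`. The database is invariant under
exchanging `x_1 ↔ x_2` on all vertex attributes, so `A_j` takes the values `x_1` and `x_2`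
equally often, and the estimate is `2·|E| · 1/2 = |E|`.
-/

lemma endpoints_mk (u v : V) : endpoints s(u, v) = {u, v} := by
  ext x
  simp [endpoints]

lemma patT_mk (u v : V) : patT s(u, v) = {none, some u, some v} := by
  simp [patT, endpoints_mk, image_insert]

def swapTup {W : Type*} (t : Tup W) : Tup W := fun A => (t A).map (Sum.map id Fin.rev)

lemma swapTup_involutive {W : Type*} : Function.Involutive (swapTup (W := W)) := by
  intro t
  funext A
  rcases h : t A with _ | _ | _ <;> simp [swapTup, h]

lemma swapTup_tupleOf {W : Type*} [DecidableEq W] (eo : Option (Sym2 W)) (P : Finset W)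
    (g : W → Fin 2) : swapTup (tupleOf eo P g) = tupleOf eo P (Fin.rev ∘ g) := by
  funext A
  rcases A with _ | v
  · cases eo <;> rfl
  · by_cases hv : v ∈ P <;> simp [swapTup, tupleOf, hv]

lemma map_swapTup_image_univ {ι : Type*} [Fintype ι] (F : ι → Tup V) {σ : ι → ι}
    (hσ : σ.Surjective) (hF : ∀ x, swapTup (F x) = F (σ x)) :
    (univ.image F).val.map swapTup = (univ.image F).val := by
  rw [← image_val_of_injOn swapTup_involutive.injective.injOn, image_image,
    show swapTup ∘ F = F ∘ σ from funext hF]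
  congr 1
  ext t
  simp only [mem_image, mem_univ, true_and, Function.comp_apply]
  exact (hσ.exists (p := (F · = t))).symm

lemma map_swapTup_redDB : (redDB G).map swapTup = redDB G := by
  have hrev : (fun g : V → Fin 2 => Fin.rev ∘ g).Surjective :=
    Function.Involutive.surjective fun g => funext fun v => Fin.rev_rev (g v)
  have hconst (P : Finset V) :
      (univ.image fun p : Fin 2 => tupleOf none P fun _ => p).val.map swapTup =
        (univ.image fun p : Fin 2 => tupleOf none P fun _ => p).val :=
    map_swapTup_image_univ _ Fin.rev_surjective fun _ => swapTup_tupleOf _ _ _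
  simp only [redDB, Multiset.map_add, ← Multiset.coe_mapAddMonoidHom, map_sum, map_nsmul]
  simp only [Multiset.coe_mapAddMonoidHom, map_swapTup_image_univ _ hrev (swapTup_tupleOf _ _),
    hconst]

lemma card_filter_eq_of_map_eq {α : Type*} {D : Multiset α} {σ : α → α} (hD : D.map σ = D)
    (p : α → Prop) [DecidablePred p] : (D.filter p).card = (D.filter fun a => p (σ a)).card := by
  conv_lhs => rw [← hD]
  rw [← Multiset.countP_eq_card_filter, Multiset.countP_map]

lemma cnt1_redDB_rev (A : Attr V) (w : Fin 2) :
    cnt1 (redDB G) A (Sum.inr w.rev) = cnt1 (redDB G) A (Sum.inr w) := by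
  rw [cnt1, card_filter_eq_of_map_eq (map_swapTup_redDB G), cnt1]
  congr 1
  refine Multiset.filter_congr fun t _ => ?_
  rcases h : t A with _ | _ | _ <;> simp [swapTup, h]

lemma cnt_le_cnt1 (D : Multiset (Tup V)) {T : Finset (Attr V)} {A : Attr V} (hA : A ∈ T)
    (f : Attr V → Val V) : cnt D T f ≤ cnt1 D A (f A) :=
  Multiset.card_le_card (Multiset.monotone_filter_right D fun _ ht => ht A hA)

variable {G} in
lemma cnt_redDB_of_mem_edgeFinset {e : Sym2 V} (he : e ∈ G.edgeFinset) {T : Finset (Attr V)}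
    (hT : none ∈ T) {f : Attr V → Val V} (hf : f none = Sum.inl e) :
    cnt (redDB G) T f = numE G *
      #{t ∈ univ.image fun g : V → Fin 2 => tupleOf (some e) (endpoints e) g |
        ∀ A ∈ T, t A = some (f A)} := by
  have hsat {t : Tup V} (ht : ∀ A ∈ T, t A = some (f A)) : t none = some (Sum.inl e) :=
    hf ▸ ht none hT
  have hzero {s : Finset (Tup V)} (hs : ∀ t ∈ s, t none ≠ some (Sum.inl e)) :
      Multiset.countP (fun t => ∀ A ∈ T, t A = some (f A)) s.val = 0 :=
    Multiset.countP_eq_zero.mpr fun t ht hT => hs t ht (hsat hT)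
  rw [cnt, ← Multiset.countP_eq_card_filter]
  simp only [redDB, Multiset.countP_add, ← Multiset.coe_countPAddMonoidHom, map_sum, map_nsmul]
  simp only [Multiset.coe_countPAddMonoidHom]
  rw [sum_eq_single_of_mem e he, sum_eq_zero, sum_eq_zero, add_zero, add_zero, smul_eq_mul,
    Multiset.countP_eq_card_filter, ← filter_val, card_val]
  · exact fun _ _ => by rw [hzero (forall_mem_image.mpr fun _ _ => by simp [tupleOf]), smul_zero]
  · exact fun _ _ => by rw [hzero (forall_mem_image.mpr fun _ _ => by simp [tupleOf]), smul_zero]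
  · exact fun _ _ hne => by
      rw [hzero (forall_mem_image.mpr fun _ _ => by simp [tupleOf, hne]), smul_zero]

def pairAssign (u : V) (ab : Fin 2 × Fin 2) : V → Fin 2 := fun x => if x = u then ab.1 else ab.2

lemma card_filter_image_tupleOf_endpoints (eo : Option (Sym2 V)) {u v : V} (huv : u ≠ v)
    (p : Tup V → Prop) [DecidablePred p] :
    #{t ∈ univ.image fun g : V → Fin 2 => tupleOf eo (endpoints s(u, v)) g | p t} =
      #{ab : Fin 2 × Fin 2 | p (tupleOf eo {u, v} (pairAssign u ab))} := by
  have hrestrict (g : V → Fin 2) :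
      tupleOf eo {u, v} (pairAssign u (g u, g v)) = tupleOf eo {u, v} g := by
    funext A
    rcases A with _ | x
    · rfl
    · by_cases hx : x = u
      · simp [tupleOf, pairAssign, hx]
      · by_cases hxv : x = v <;> simp [tupleOf, pairAssign, hx, hxv, huv.symm]
  have himage : (univ.image fun g : V → Fin 2 => tupleOf eo {u, v} g) =
      univ.image fun ab => tupleOf eo {u, v} (pairAssign u ab) := by
    ext t
    simp only [mem_image, mem_univ, true_and]
    exact ⟨fun ⟨g, hg⟩ => ⟨(g u, g v), (hrestrict g).trans hg⟩, fun ⟨ab, hab⟩ => ⟨_, hab⟩⟩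
  have hinj : Function.Injective fun ab => tupleOf eo {u, v} (pairAssign u ab) := by
    intro ab cd h
    have hu := congrFun h (some u)
    have hv := congrFun h (some v)
    simp [tupleOf, pairAssign, huv.symm] at hu hv
    exact Prod.ext hu hv
  rw [endpoints_mk, himage, filter_image, card_image_of_injective _ hinj]

variable {G} in
lemma cnt_redDB_edge_vertex {i j : V} (hadj : G.Adj i j) :
    cnt (redDB G) {none, some i} (patF s(i, j)) = 2 * numE G := by
  rw [cnt_redDB_of_mem_edgeFinset (G.mem_edgeFinset.mpr hadj) (by simp) rfl,
    card_filter_image_tupleOf_endpoints _ hadj.ne, mul_comm]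
  congr 1
  simp [pairAssign, tupleOf, patF]
  decide

variable {G} in
lemma cnt_redDB_patT {i j : V} (hadj : G.Adj i j) :
    cnt (redDB G) (patT s(i, j)) (patF s(i, j)) = numE G := by
  rw [cnt_redDB_of_mem_edgeFinset (G.mem_edgeFinset.mpr hadj) (by simp [patT_mk]) rfl,
    card_filter_image_tupleOf_endpoints _ hadj.ne, patT_mk]
  convert mul_one (numE G)
  simp [pairAssign, tupleOf, patF, hadj.ne.symm]
  decide

lemma patT_inter_eq {i j : V} {S : Finset (Attr V)} (hES : none ∈ S) (hiS : some i ∈ S)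
    (hjS : some j ∉ S) : patT s(i, j) ∩ S = {none, some i} := by
  rw [patT_mk, insert_inter_of_mem hES, insert_inter_of_mem hiS, singleton_inter_of_notMem hjS,
    insert_empty]

lemma patT_sdiff_eq {i j : V} {S : Finset (Attr V)} (hES : none ∈ S) (hiS : some i ∈ S)
    (hjS : some j ∉ S) : patT s(i, j) \ S = {some j} := by
  rw [patT_mk, insert_sdiff_of_mem _ hES, insert_sdiff_of_mem _ hiS,
    sdiff_eq_self_of_disjoint (disjoint_singleton_left.mpr hjS)]

theorem redDB_exact_case_general {V : Type*} [Fintype V] [DecidableEq V]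
    (G : SimpleGraph V) [DecidableRel G.Adj]
    (i j : V) (hadj : G.Adj i j)
    (S : Finset (Attr V)) (hES : none ∈ S) (hiS : some i ∈ S) (hjS : some j ∉ S) :
    cnt (redDB G) ({none, some i} : Finset (Attr V)) (patF s(i, j)) = 2 * numE G ∧
    est G (redDB G) S (patT s(i, j)) (patF s(i, j)) = (numE G : ℚ) ∧
    cnt (redDB G) (patT s(i, j)) (patF s(i, j)) = numE G ∧
    err G (redDB G) S (patT s(i, j)) (patF s(i, j)) = 0 := by
  have hpair := cnt_redDB_edge_vertex hadj
  have hpat := cnt_redDB_patT hadj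
  have hpos : 0 < cnt1 (redDB G) (some j) (Sum.inr 0) :=
    calc 0 < numE G := card_pos.mpr ⟨s(i, j), G.mem_edgeFinset.mpr hadj⟩
      _ = cnt (redDB G) (patT s(i, j)) (patF s(i, j)) := hpat.symm
      _ ≤ _ := cnt_le_cnt1 _ (by simp [patT_mk]) _
  have hsym : cnt1 (redDB G) (some j) (Sum.inr 1) = cnt1 (redDB G) (some j) (Sum.inr 0) :=
    cnt1_redDB_rev G _ 0
  have hest : est G (redDB G) S (patT s(i, j)) (patF s(i, j)) = numE G := by
    rw [est, patT_inter_eq hES hiS hjS, patT_sdiff_eq hES hiS hjS, prod_singleton, hpair]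
    rw [show dom G (some j) = {Sum.inr 0, Sum.inr 1} from rfl, sum_pair (by simp), hsym]
    have : (cnt1 (redDB G) (some j) (Sum.inr 0) : ℚ) ≠ 0 := by exact_mod_cast hpos.ne'
    simp only [patF]
    field_simp
    push_cast
    ring
  exact ⟨hpair, hest, hpat, by rw [err, hpat, hest, sub_self, abs_zero]⟩

/-- Exact-estimation case of Lemma 1: for an edge `e_r = {v_i, v_j} ∈ E`, the pattern
`p = {A_E = x_r, A_i = x_1, A_j = x_1}`, and a label attribute set `S` with `A_E ∈ S`,
`A_i ∈ S`, `A_j ∉ S`: `c_D({A_E = x_r, A_i = x_1}) = 2·|E|` and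
`Est(p, L_S(D)) = |E| = c_D(p)`, so `Err(L_S(D), p) = 0`. -/
theorem redDB_exact_case {V : Type*} [Fintype V] [DecidableEq V]
    (G : SimpleGraph V) [DecidableRel G.Adj]
    (hV : 2 ≤ Fintype.card V) (hE : 1 ≤ numE G)
    (i j : V) (hadj : G.Adj i j)
    (S : Finset (Attr V)) (hES : none ∈ S) (hiS : some i ∈ S) (hjS : some j ∉ S) :
    cnt (redDB G) ({none, some i} : Finset (Attr V)) (patF s(i, j)) = 2 * numE G ∧
    est G (redDB G) S (patT s(i, j)) (patF s(i, j)) = (numE G : ℚ) ∧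
    cnt (redDB G) (patT s(i, j)) (patF s(i, j)) = numE G ∧
    err G (redDB G) S (patT s(i, j)) (patF s(i, j)) = 0 :=
  redDB_exact_case_general G i j hadj S hES hiS hjS

end PatternLabel
end
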